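/- arXiv:1901.10987 — 4 statements merged into one kernel-verified Lean document; each statement's English description precedes it below -/
import Mathlib

section
/- Every cosmic space is cs-separable: if a regular topological space X has a countable network, then X contains a countable set D such that every point of X is the limit of a sequence of points of D. -/
theorem cosmic_csSeparable (X : Type*) [TopologicalSpace X] [RegularSpace X]
    (N : Set (Set X)) (hcount : N.Countable)
    (hnet : ∀ U : Set X, IsOpen U → ∀ x ∈ U, ∃ n ∈ N, x ∈ n ∧ n ⊆ U) :
    ∃ D : Set X, D.Countable ∧
      ∀ x : X, ∃ u : ℕ → X, (∀ n, u n ∈ D) ∧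
        Filter.Tendsto u Filter.atTop (nhds x) := by
  rcases isEmpty_or_nonempty X with hX | hX
  · exact ⟨∅, Set.countable_empty, fun x => (IsEmpty.false x).elim⟩
  classical
  -- choice function: a point in the intersection of a family, when nonempty
  set f : Set (Set X) → X := fun s =>
    if h : (⋂₀ s).Nonempty then h.choose else Classical.arbitrary X with hf
  set S : Set (Set (Set X)) := {s | s ⊆ N ∧ s.Finite} with hS
  have hScount : S.Countable := by
    refine (Set.countable_setOf_finite_subset hcount).mono ?_
    intro s hs
    exact ⟨hs.2, hs.1⟩
  refine ⟨f '' S, hScount.image f, fun x => ?_⟩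
  -- the network elements containing x
  set Nx : Set (Set X) := {n ∈ N | x ∈ n} with hNx
  have hNxne : Nx.Nonempty := by
    obtain ⟨n, hn, hxn, -⟩ := hnet Set.univ isOpen_univ x (Set.mem_univ x)
    exact ⟨n, hn, hxn⟩
  obtain ⟨e, he⟩ := (hcount.mono (fun n hn => hn.1 : Nx ⊆ N)).exists_eq_range hNxne
  -- e : ℕ → Set X with Nx = range e
  have heN : ∀ k, e k ∈ N := fun k => by
    have : e k ∈ Nx := he ▸ Set.mem_range_self k
    exact this.1
  have hex : ∀ k, x ∈ e k := fun k => by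
    have : e k ∈ Nx := he ▸ Set.mem_range_self k
    exact this.2
  set s : ℕ → Set (Set X) := fun n => e '' (Set.Iic n) with hs
  have hsne : ∀ n, (⋂₀ s n).Nonempty := fun n =>
    ⟨x, by rintro t ⟨k, -, rfl⟩; exact hex k⟩
  refine ⟨fun n => f (s n), fun n => ⟨s n, ⟨?_, (Set.finite_Iic n).image e⟩, rfl⟩, ?_⟩
  · rintro t ⟨k, -, rfl⟩; exact heN k
  · have hmem : ∀ n, f (s n) ∈ ⋂₀ s n := fun n => by
      rw [hf]; simp only [dif_pos (hsne n)]; exact (hsne n).choose_spec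
    rw [tendsto_nhds]
    intro U hU hxU
    obtain ⟨n0, hn0N, hxn0, hn0U⟩ := hnet U hU x hxU
    have : n0 ∈ Nx := ⟨hn0N, hxn0⟩
    rw [he] at this
    obtain ⟨k0, hk0⟩ := this
    refine Filter.mem_atTop_sets.2 ⟨k0, fun n hn => hn0U ?_⟩
    have : f (s n) ∈ e k0 := hmem n (e k0) ⟨k0, hn, rfl⟩
    rwa [hk0] at this
end

section
/- If f : M → X is a compact-covering continuous surjection from a separable metric space M onto a topological space X, then X is k-separable: there is a countable set E ⊆ X such that every compact set K ⊆ X is contained in a compact set C ⊆ X with K ⊆ closure(C ∩ E). -/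
open Filter Topology

theorem compactCovering_kSeparable {M X : Type*} [MetricSpace M]
    [TopologicalSpace.SeparableSpace M] [TopologicalSpace X] (f : M → X)
    (hf : Continuous f) (hsurj : Function.Surjective f)
    (hcc : ∀ K : Set X, IsCompact K → ∃ C : Set M, IsCompact C ∧ f '' C = K) :
    ∃ E : Set X, E.Countable ∧
      ∀ K : Set X, IsCompact K → ∃ C : Set X, IsCompact C ∧ K ⊆ C ∧
        K ⊆ closure (C ∩ E) := by
  obtain ⟨D, hDc, hDd⟩ := TopologicalSpace.exists_countable_dense M
  refine ⟨f '' D, hDc.image f, ?_⟩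
  intro K hK
  obtain ⟨C', hC', hfC'⟩ := hcc K hK
  set r : ℕ → ℝ := fun n => 1 / (n + 1) with hrdef
  have hrpos : ∀ n : ℕ, 0 < r n := fun n => by positivity
  have hS : ∀ n : ℕ, ∃ s : Set M, s ⊆ D ∧ s.Finite ∧
      (∀ d ∈ s, ∃ z ∈ C', dist d z < r n) ∧
      C' ⊆ ⋃ d ∈ s, Metric.ball d (r n) := by
    intro n
    have hcov : C' ⊆ ⋃ d ∈ {d ∈ D | ∃ z ∈ C', dist d z < r n},
        Metric.ball d (r n) := by
      intro m hm
      obtain ⟨d, hdD, hdist⟩ := hDd.exists_dist_lt m (hrpos n)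
      refine Set.mem_biUnion ⟨hdD, ⟨m, hm, by rwa [dist_comm]⟩⟩ ?_
      exact Metric.mem_ball.mpr hdist
    obtain ⟨b', hb'sub, hb'fin, hb'cov⟩ :=
      hC'.elim_finite_subcover_image (fun d _ => Metric.isOpen_ball) hcov
    exact ⟨b', fun d hd => (hb'sub hd).1, hb'fin, fun d hd => (hb'sub hd).2, hb'cov⟩
  choose S hSD hSfin hSnear hScov using hS
  set T : Set M := ⋃ n, S n with hTdef
  set C₂ : Set M := C' ∪ T with hC₂def
  have hC₂ : IsCompact C₂ := by
    rw [isCompact_iff_finite_subcover]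
    intro ι U hU hcover
    classical
    obtain ⟨t₁, ht₁⟩ := hC'.elim_finite_subcover U hU
      (Set.Subset.trans Set.subset_union_left hcover)
    have hVopen : IsOpen (⋃ i ∈ t₁, U i) := isOpen_biUnion fun i _ => hU i
    obtain ⟨δ, hδ, hthick⟩ := hC'.exists_thickening_subset_open hVopen ht₁
    obtain ⟨N, hN⟩ := exists_nat_one_div_lt hδ
    have hF : (⋃ n ∈ Finset.range N, S n).Finite :=
      Set.Finite.biUnion (Finset.range N).finite_toSet (fun n _ => hSfin n)
    have hFsub : (⋃ n ∈ Finset.range N, S n) ⊆ ⋃ i, U i := by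
      refine Set.Subset.trans ?_ hcover
      refine Set.Subset.trans ?_ Set.subset_union_right
      exact Set.iUnion₂_subset fun n _ => Set.subset_iUnion S n
    obtain ⟨t₂, ht₂⟩ := hF.isCompact.elim_finite_subcover U hU hFsub
    refine ⟨t₁ ∪ t₂, ?_⟩
    intro x hx
    have hsub₁ : (⋃ i ∈ t₁, U i) ⊆ ⋃ i ∈ t₁ ∪ t₂, U i :=
      Set.iUnion₂_subset fun i hi =>
        Set.subset_biUnion_of_mem (Finset.mem_union_left _ hi)
    have hsub₂ : (⋃ i ∈ t₂, U i) ⊆ ⋃ i ∈ t₁ ∪ t₂, U i :=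
      Set.iUnion₂_subset fun i hi =>
        Set.subset_biUnion_of_mem (Finset.mem_union_right _ hi)
    rcases hx with hx | hx
    · exact hsub₁ (ht₁ hx)
    · obtain ⟨n, hn⟩ := Set.mem_iUnion.mp hx
      by_cases hnN : n < N
      · exact hsub₂ (ht₂ (Set.mem_biUnion (Finset.mem_range.mpr hnN) hn))
      · obtain ⟨z, hz, hdz⟩ := hSnear n x hn
        have hrle : r n ≤ r N := by
          apply one_div_le_one_div_of_le (by positivity)
          have : (N : ℝ) ≤ n := Nat.cast_le.mpr (not_lt.mp hnN)
          linarith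
        have hxthick : x ∈ Metric.thickening δ C' := by
          rw [Metric.mem_thickening_iff]
          exact ⟨z, hz, lt_of_lt_of_le (lt_of_lt_of_le hdz hrle) hN.le⟩
        exact hsub₁ (hthick hxthick)
  refine ⟨f '' C₂, hC₂.image hf, ?_, ?_⟩
  · rw [← hfC']
    exact Set.image_mono Set.subset_union_left
  · intro x hx
    rw [← hfC'] at hx
    obtain ⟨m, hm, rfl⟩ := hx
    have hd : ∀ n, ∃ d ∈ S n, dist m d < r n := by
      intro n
      obtain ⟨d, hdS, hdb⟩ := Set.mem_iUnion₂.mp (hScov n hm)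
      exact ⟨d, hdS, Metric.mem_ball.mp hdb⟩
    choose d hdS hdm using hd
    have hrt : Tendsto r atTop (𝓝 0) := tendsto_one_div_add_atTop_nhds_zero_nat
    have hdtend : Tendsto d atTop (𝓝 m) := by
      rw [tendsto_iff_dist_tendsto_zero]
      refine squeeze_zero (fun n => dist_nonneg) (fun n => ?_) hrt
      rw [dist_comm]
      exact (hdm n).le
    have htend : Tendsto (fun n => f (d n)) atTop (𝓝 (f m)) :=
      ((hf.tendsto m).comp hdtend)
    refine mem_closure_of_tendsto htend ?_
    filter_upwards with n
    exact ⟨Set.mem_image_of_mem f (Set.mem_union_right _ (Set.mem_iUnion.mpr ⟨n, hdS n⟩)),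
      Set.mem_image_of_mem f (hSD n (hdS n))⟩
end

section
/- Every semi-stratifiable space has a Gδ-diagonal: if X is a regular space admitting, for each point x, a countable system of open neighborhoods (U_n(x))_{n∈ℕ} such that every closed set F ⊆ X equals ⋂_n U_n[F] (where U_n[F] = ⋃_{x∈F} U_n(x)), then the diagonal {(x,x) : x ∈ X} is a Gδ-set in X × X. -/
theorem semiStratifiable_gDeltaDiagonal (X : Type*) [TopologicalSpace X]
    [RegularSpace X] [T1Space X] (U : X → ℕ → Set X)
    (hopen : ∀ x n, IsOpen (U x n)) (hmem : ∀ x n, x ∈ U x n)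
    (hss : ∀ F : Set X, IsClosed F → F = ⋂ n, ⋃ x ∈ F, U x n) :
    IsGδ {p : X × X | p.1 = p.2} := by
  set V : X → ℕ → Set X := fun x n => ⋂ k ∈ Finset.range (n + 1), U x k with hVdef
  have hVopen : ∀ x n, IsOpen (V x n) := fun x n =>
    isOpen_biInter_finset fun k _ => hopen x k
  have hVmem : ∀ x n, x ∈ V x n := fun x n =>
    Set.mem_iInter₂.2 fun k _ => hmem x k
  have hVsub : ∀ x {m n : ℕ}, m ≤ n → V x n ⊆ U x m := by
    intro x m n hmn y hy
    exact Set.mem_iInter₂.1 hy m (Finset.mem_range.2 (Nat.lt_succ_of_le hmn))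
  have key : ∀ (F : Set X), IsClosed F → ∀ a, a ∉ F → ∃ n, ∀ x ∈ F, a ∉ U x n := by
    intro F hF a ha
    by_contra h
    push_neg at h
    apply ha
    rw [hss F hF]
    refine Set.mem_iInter.2 fun n => ?_
    obtain ⟨x, hxF, hax⟩ := h n
    exact Set.mem_biUnion hxF hax
  have hdiag : {p : X × X | p.1 = p.2} = ⋂ n, ⋃ x, V x n ×ˢ V x n := by
    ext ⟨a, b⟩
    simp only [Set.mem_setOf_eq, Set.mem_iInter, Set.mem_iUnion, Set.mem_prod]
    constructor
    · rintro rfl n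
      exact ⟨a, hVmem a n, hVmem a n⟩
    · intro h
      by_contra hab
      obtain ⟨Oa, Ob, hOa, hOb, haO, hbO, hdisj⟩ := t2_separation hab
      obtain ⟨n₁, hn₁⟩ := key Oaᶜ hOa.isClosed_compl a (by simpa using haO)
      obtain ⟨n₂, hn₂⟩ := key Obᶜ hOb.isClosed_compl b (by simpa using hbO)
      obtain ⟨x, hax, hbx⟩ := h (max n₁ n₂)
      have hxa : x ∈ Oa := by
        by_contra hx
        exact hn₁ x hx (hVsub x (le_max_left n₁ n₂) hax)
      have hxb : x ∈ Ob := by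
        by_contra hx
        exact hn₂ x hx (hVsub x (le_max_right n₁ n₂) hbx)
      exact hdisj.ne_of_mem hxa hxb rfl
  rw [hdiag]
  exact .iInter fun n => ((isOpen_iUnion fun x => (hVopen x n).prod (hVopen x n)).isGδ)
end

section
/- For a Tychonoff space X, the space C_p(X) of continuous real-valued functions with the topology of pointwise convergence is metrizable if and only if X is countable. -/
open TopologicalSpace Filter Set Topology

theorem cp_metrizable_iff_countable (X : Type*) [TopologicalSpace X]
    [CompletelyRegularSpace X] [T1Space X] :
    TopologicalSpace.MetrizableSpace {f : X → ℝ // Continuous f} ↔ Countable X := by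
  constructor
  · intro hm
    set C := {f : X → ℝ // Continuous f} with hC
    let z : C := ⟨fun _ => 0, continuous_const⟩
    obtain ⟨U, hU⟩ := (𝓝 z).exists_antitone_basis
    have key : ∀ n, ∃ I : Set X, I.Finite ∧
        ∀ g : C, (∀ x ∈ I, g.1 x = 0) → g ∈ U n := by
      intro n
      have hUn : U n ∈ 𝓝 z := hU.1.mem_of_mem trivial
      rw [nhds_induced] at hUn
      obtain ⟨T, hT, hTsub⟩ := hUn
      rw [nhds_pi, Filter.mem_pi] at hT
      obtain ⟨I, hIfin, t, ht, hpi⟩ := hT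
      refine ⟨I, hIfin, fun g hg => hTsub ?_⟩
      refine hpi fun x hx => ?_
      rw [hg x hx]
      exact mem_of_mem_nhds (ht x)
    choose I hIfin hI using key
    have hcov : (Set.univ : Set X) ⊆ ⋃ n, I n := by
      intro x _
      by_contra hx
      simp only [mem_iUnion, not_exists] at hx
      have hev : Continuous fun g : C => g.1 x :=
        (continuous_apply x).comp continuous_subtype_val
      have hV : {g : C | |g.1 x| < 1} ∈ 𝓝 z := by
        have : ContinuousAt (fun g : C => |g.1 x|) z := (hev.abs).continuousAt
        have h0 : |z.1 x| < 1 := by simp [z]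
        exact this (Iio_mem_nhds h0)
      obtain ⟨n, hn⟩ := hU.1.mem_iff.mp hV
      obtain ⟨f, hfc, hfx, hfK⟩ :=
        CompletelyRegularSpace.completely_regular x (I n) (hIfin n).isClosed (hx n)
      have hgc : Continuous fun y => 1 - (f y : ℝ) :=
        continuous_const.sub (continuous_subtype_val.comp hfc)
      have hg0 : ∀ y ∈ I n, (1 : ℝ) - (f y : ℝ) = 0 := by
        intro y hy
        have := hfK hy
        simp [Set.EqOn] at this ⊢
        rw [this]
        simp
      have hmem : (⟨fun y => 1 - (f y : ℝ), hgc⟩ : C) ∈ U n :=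
        hI n _ hg0
      have := hn.2 hmem
      simp only [Set.mem_setOf_eq, hfx] at this
      norm_num at this
    have : (Set.univ : Set X).Countable :=
      Set.Countable.mono hcov (Set.countable_iUnion fun n => (hIfin n).countable)
    exact Set.countable_univ_iff.mp this
  · intro h
    exact Topology.IsEmbedding.subtypeVal.metrizableSpace
end
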